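/- Let A be a finite set, u : A → [0,∞), γ ∈ (0,1], v^T_γ = max over histories of length T of U^T_γ, and V̄_γ = sup over infinite histories a of limsup_{T→∞} U^T_γ(a). Assuming that (v^T_γ)_T converges, it holds that lim_{T→∞} v^T_γ = V̄_γ. -/
import Mathlib


open Finset Filter

/-- Empirical frequency of action `b` in the first `t` periods of history `a`. -/
noncomputable def freq {A : Type*} [DecidableEq A] (a : ℕ → A) (b : A) (t : ℕ) : ℝ :=
  if t = 0 then 0 else (∑ s ∈ Finset.Icc 1 t, if a s = b then (1 : ℝ) else 0) / t

/-- Average fatigued payoff of history `a` over the first `T` periods. -/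
noncomputable def avgU {A : Type*} [DecidableEq A] (u : A → ℝ) (γ : ℝ) (a : ℕ → A)
    (T : ℕ) : ℝ :=
  (∑ t ∈ Finset.Icc 1 T, (1 - γ * freq a (a t) (t - 1)) * u (a t)) / T

/-- `v^T_γ`: the best average payoff achievable in `T` periods. -/
noncomputable def vT {A : Type*} [DecidableEq A] (u : A → ℝ) (γ : ℝ) (T : ℕ) : ℝ :=
  ⨆ a : ℕ → A, avgU u γ a T

section aux
variable {A : Type*} [DecidableEq A]

lemma cnt_nonneg (a : ℕ → A) (b : A) (t : ℕ) :
    0 ≤ ∑ s ∈ Finset.Icc 1 t, if a s = b then (1 : ℝ) else 0 :=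
  Finset.sum_nonneg fun s _ => by positivity

lemma cnt_le (a : ℕ → A) (b : A) (t : ℕ) :
    (∑ s ∈ Finset.Icc 1 t, if a s = b then (1 : ℝ) else 0) ≤ t := by
  calc (∑ s ∈ Finset.Icc 1 t, if a s = b then (1 : ℝ) else 0)
      ≤ ∑ s ∈ Finset.Icc 1 t, 1 := Finset.sum_le_sum fun s _ => by split <;> norm_num
    _ = t := by simp

lemma freq_nonneg (a : ℕ → A) (b : A) (t : ℕ) : 0 ≤ freq a b t := by
  unfold freq
  split
  · exact le_refl _
  · exact div_nonneg (cnt_nonneg a b t) (Nat.cast_nonneg t)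

lemma freq_le_one (a : ℕ → A) (b : A) (t : ℕ) : freq a b t ≤ 1 := by
  unfold freq
  split
  · norm_num
  · next h =>
    rw [div_le_one (by positivity)]
    exact cnt_le a b t

lemma term_nonneg (u : A → ℝ) (hu : ∀ x, 0 ≤ u x) {γ : ℝ} (hγ : 0 < γ ∧ γ ≤ 1)
    (a : ℕ → A) (t m : ℕ) : 0 ≤ (1 - γ * freq a (a t) m) * u (a t) := by
  apply mul_nonneg _ (hu _)
  nlinarith [freq_le_one a (a t) m, freq_nonneg a (a t) m, hγ.1, hγ.2]

lemma term_le (u : A → ℝ) (hu : ∀ x, 0 ≤ u x) {γ : ℝ} (hγ : 0 < γ ∧ γ ≤ 1)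
    {M : ℝ} (hM : ∀ x, u x ≤ M)
    (a : ℕ → A) (t m : ℕ) : (1 - γ * freq a (a t) m) * u (a t) ≤ M := by
  calc (1 - γ * freq a (a t) m) * u (a t) ≤ 1 * u (a t) := by
        apply mul_le_mul_of_nonneg_right _ (hu _)
        nlinarith [freq_nonneg a (a t) m, hγ.1]
    _ = u (a t) := one_mul _
    _ ≤ M := hM _

lemma avgU_nonneg (u : A → ℝ) (hu : ∀ x, 0 ≤ u x) {γ : ℝ} (hγ : 0 < γ ∧ γ ≤ 1)
    (a : ℕ → A) (T : ℕ) : 0 ≤ avgU u γ a T := by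
  apply div_nonneg _ (Nat.cast_nonneg T)
  exact Finset.sum_nonneg fun t _ => term_nonneg u hu hγ a t _

lemma avgU_le (u : A → ℝ) (hu : ∀ x, 0 ≤ u x) {γ : ℝ} (hγ : 0 < γ ∧ γ ≤ 1)
    {M : ℝ} (hM0 : 0 ≤ M) (hM : ∀ x, u x ≤ M)
    (a : ℕ → A) (T : ℕ) : avgU u γ a T ≤ M := by
  rcases Nat.eq_zero_or_pos T with h | h
  · simp [avgU, h, hM0]
  · rw [avgU, div_le_iff₀ (by positivity)]
    calc (∑ t ∈ Finset.Icc 1 T, (1 - γ * freq a (a t) (t - 1)) * u (a t))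
        ≤ ∑ t ∈ Finset.Icc 1 T, M := Finset.sum_le_sum fun t _ => term_le u hu hγ hM a t _
      _ = T * M := by simp [mul_comm]
      _ = M * T := mul_comm _ _

lemma bddAbove_avgU (u : A → ℝ) (hu : ∀ x, 0 ≤ u x) {γ : ℝ} (hγ : 0 < γ ∧ γ ≤ 1)
    {M : ℝ} (hM0 : 0 ≤ M) (hM : ∀ x, u x ≤ M) (T : ℕ) :
    BddAbove (Set.range fun a : ℕ → A => avgU u γ a T) := by
  refine ⟨M, ?_⟩
  rintro x ⟨a, rfl⟩
  exact avgU_le u hu hγ hM0 hM a T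

lemma avgU_le_vT [Nonempty A] (u : A → ℝ) (hu : ∀ x, 0 ≤ u x) {γ : ℝ} (hγ : 0 < γ ∧ γ ≤ 1)
    {M : ℝ} (hM0 : 0 ≤ M) (hM : ∀ x, u x ≤ M) (a : ℕ → A) (T : ℕ) :
    avgU u γ a T ≤ vT u γ T :=
  le_ciSup (bddAbove_avgU u hu hγ hM0 hM T) a

lemma vT_le [Nonempty A] (u : A → ℝ) (hu : ∀ x, 0 ≤ u x) {γ : ℝ} (hγ : 0 < γ ∧ γ ≤ 1)
    {M : ℝ} (hM0 : 0 ≤ M) (hM : ∀ x, u x ≤ M) (T : ℕ) : vT u γ T ≤ M :=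
  ciSup_le fun a => avgU_le u hu hγ hM0 hM a T

lemma vT_nonneg [Nonempty A] (u : A → ℝ) (hu : ∀ x, 0 ≤ u x) {γ : ℝ} (hγ : 0 < γ ∧ γ ≤ 1)
    {M : ℝ} (hM0 : 0 ≤ M) (hM : ∀ x, u x ≤ M) (T : ℕ) : 0 ≤ vT u γ T :=
  le_trans (avgU_nonneg u hu hγ (Classical.arbitrary _) T) (avgU_le_vT u hu hγ hM0 hM _ T)

lemma freq_congr (a₁ a₂ : ℕ → A) (b : A) (t : ℕ) (h : ∀ s, 1 ≤ s → s ≤ t → a₁ s = a₂ s) :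
    freq a₁ b t = freq a₂ b t := by
  unfold freq
  split
  · rfl
  · congr 1
    refine Finset.sum_congr rfl fun s hs => ?_
    rw [Finset.mem_Icc] at hs
    rw [h s hs.1 hs.2]

lemma avgU_congr (u : A → ℝ) (γ : ℝ) (a₁ a₂ : ℕ → A) (T : ℕ)
    (h : ∀ s, 1 ≤ s → s ≤ T → a₁ s = a₂ s) : avgU u γ a₁ T = avgU u γ a₂ T := by
  unfold avgU
  congr 1
  refine Finset.sum_congr rfl fun t ht => ?_
  rw [Finset.mem_Icc] at ht
  rw [h t ht.1 ht.2, freq_congr a₁ a₂ _ (t - 1) fun s hs1 hs2 => h s hs1 (hs2.trans (by omega))]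

end aux
section aux2
variable {A : Type*} [DecidableEq A]

lemma Icc_eq_Ioc (t : ℕ) : Finset.Icc 1 t = Finset.Ioc 0 t := Finset.Icc_add_one_left_eq_Ioc 0 t

lemma sum_shift (f : ℕ → ℝ) (P m : ℕ) :
    ∑ r ∈ Finset.Ioc P (P + m), f r = ∑ r ∈ Finset.Ioc 0 m, f (P + r) := by
  have : Finset.Ioc P (P + m) = Finset.map (addLeftEmbedding P) (Finset.Ioc 0 m) := by
    rw [Finset.map_add_left_Ioc]; simp
  rw [this, Finset.sum_map]
  simp [addLeftEmbedding]

/-- Frequency in the glued history is at most block frequency plus contamination. -/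
lemma freq_glue (h a : ℕ → A) (P m : ℕ) (c : A) (hm : 1 ≤ m) :
    freq (fun t => if t ≤ P then h t else a (t - P)) c (P + m)
      ≤ freq a c m + P / (P + m) := by
  set h' : ℕ → A := fun t => if t ≤ P then h t else a (t - P) with hh'
  have hPm : (0:ℝ) < P + m := by positivity
  have hm' : (0:ℝ) < m := by positivity
  set cnt : ℝ := ∑ s ∈ Finset.Icc 1 m, if a s = c then (1:ℝ) else 0 with hcnt
  have key : (∑ s ∈ Finset.Icc 1 (P + m), if h' s = c then (1:ℝ) else 0) ≤ P + cnt := by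
    rw [Icc_eq_Ioc, ← Finset.sum_Ioc_consecutive _ (Nat.zero_le P) (Nat.le_add_right P m),
      sum_shift]
    gcongr
    · calc (∑ s ∈ Finset.Ioc 0 P, if h' s = c then (1:ℝ) else 0)
          ≤ ∑ s ∈ Finset.Ioc 0 P, 1 := Finset.sum_le_sum fun s _ => by split <;> norm_num
        _ = P := by simp
    · rw [hcnt, Icc_eq_Ioc]
      refine le_of_eq (Finset.sum_congr rfl fun r hr => ?_)
      rw [Finset.mem_Ioc] at hr
      have : ¬ (P + r ≤ P) := by omega
      simp only [hh', this, if_false, Nat.add_sub_cancel_left]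
  have hfreq : freq h' c (P + m) ≤ (P + cnt) / (P + m) := by
    unfold freq
    rw [if_neg (by omega : ¬ (P + m = 0))]
    push_cast
    gcongr
  have hfa : freq a c m = cnt / m := by
    unfold freq; rw [if_neg (by omega)]
  have hsplit : (↑P + cnt) / (↑P + ↑m) = ↑P / (↑P + ↑m) + cnt / (↑P + ↑m) := add_div _ _ _
  have hmono : cnt / (↑P + ↑m) ≤ cnt / m :=
    div_le_div_of_nonneg_left (cnt_nonneg a c m) hm' (by linarith)
  rw [hfa]
  linarith

end aux2
section aux3
variable {A : Type*} [DecidableEq A]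

lemma block_sum (u : A → ℝ) (hu : ∀ x, 0 ≤ u x) {γ : ℝ} (hγ : 0 < γ ∧ γ ≤ 1)
    {M : ℝ} (hM0 : 0 ≤ M) (hM : ∀ x, u x ≤ M)
    (h a : ℕ → A) (P N K : ℕ) (hK : 1 ≤ K) :
    (∑ t ∈ Finset.Icc 1 N, (1 - γ * freq a (a t) (t - 1)) * u (a t))
      - M * (K + N * P / K)
    ≤ ∑ t ∈ Finset.Icc 1 (P + N),
        (1 - γ * freq (fun t => if t ≤ P then h t else a (t - P))
            ((fun t => if t ≤ P then h t else a (t - P)) t) (t - 1))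
          * u ((fun t => if t ≤ P then h t else a (t - P)) t) := by
  set h' : ℕ → A := fun t => if t ≤ P then h t else a (t - P) with hh'
  set F : ℕ → ℝ := fun t => (1 - γ * freq h' (h' t) (t - 1)) * u (h' t) with hF
  set G : ℕ → ℝ := fun t => (1 - γ * freq a (a t) (t - 1)) * u (a t) with hG
  have hK' : (0:ℝ) < K := by positivity
  -- split the big sum
  have hsplit : ∑ t ∈ Finset.Icc 1 (P + N), F t
      = (∑ t ∈ Finset.Ioc 0 P, F t) + ∑ r ∈ Finset.Ioc 0 N, F (P + r) := by
    rw [Icc_eq_Ioc, ← Finset.sum_Ioc_consecutive _ (Nat.zero_le P) (Nat.le_add_right P N),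
      sum_shift]
  have hpre : 0 ≤ ∑ t ∈ Finset.Ioc 0 P, F t :=
    Finset.sum_nonneg fun t _ => term_nonneg u hu hγ h' t _
  -- pointwise bound on the block
  have hpt : ∀ r ∈ Finset.Ioc 0 N,
      G r - M * ((if r ≤ K then (1:ℝ) else 0) + P / K) ≤ F (P + r) := by
    intro r hr
    rw [Finset.mem_Ioc] at hr
    have hr1 : 1 ≤ r := hr.1
    have hcur : h' (P + r) = a r := by
      simp only [hh']
      rw [if_neg (by omega), Nat.add_sub_cancel_left]
    by_cases hrK : r ≤ K
    · -- trivial bound: G r ≤ M and F ≥ 0; M*(1 + P/K) ≥ M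
      have h1 : G r ≤ M := term_le u hu hγ hM a r _
      have h2 : 0 ≤ F (P + r) := term_nonneg u hu hγ h' (P + r) _
      have h3 : (0:ℝ) ≤ (P:ℝ) / K := by positivity
      rw [if_pos hrK]
      nlinarith
    · -- contamination bound
      rw [if_neg hrK]
      have hrK' : K + 1 ≤ r := by omega
      have hm1 : 1 ≤ r - 1 := by omega
      have hidx : P + r - 1 = P + (r - 1) := by omega
      have hfg : freq h' (a r) (P + (r - 1)) ≤ freq a (a r) (r - 1) + (P:ℝ) / ((P:ℝ) + ((r - 1 : ℕ):ℝ)) :=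
        freq_glue h a P (r - 1) (a r) hm1
      have hPK : (P:ℝ) / ((P:ℝ) + ((r - 1 : ℕ):ℝ)) ≤ (P:ℝ) / K := by
        apply div_le_div_of_nonneg_left (by positivity) hK'
        have : (K:ℝ) ≤ ((P + (r-1) : ℕ) : ℝ) := by exact_mod_cast (by omega : K ≤ P + (r-1))
        push_cast at this
        linarith
      have hf' : freq h' (a r) (P + (r - 1)) ≤ freq a (a r) (r - 1) + (P:ℝ) / K :=
        hfg.trans (by linarith)
      have hFval : F (P + r) = (1 - γ * freq h' (a r) (P + (r - 1))) * u (a r) := by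
        rw [hF]
        simp only [hidx, hcur]
      rw [hFval, hG]
      have hu1 := hu (a r)
      have hu2 := hM (a r)
      have hPK0 : (0:ℝ) ≤ (P:ℝ) / K := by positivity
      have step1 : (1 - γ * (freq a (a r) (r - 1) + (P:ℝ) / K)) * u (a r)
          ≤ (1 - γ * freq h' (a r) (P + (r - 1))) * u (a r) := by
        apply mul_le_mul_of_nonneg_right _ hu1
        nlinarith [hγ.1]
      have e1 : γ * (((P:ℝ) / K) * u (a r)) ≤ ((P:ℝ) / K) * M := by
        have h1 : γ * (((P:ℝ) / K) * u (a r)) ≤ 1 * (((P:ℝ) / K) * u (a r)) :=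
          mul_le_mul_of_nonneg_right hγ.2 (mul_nonneg hPK0 hu1)
        have h2 : ((P:ℝ) / K) * u (a r) ≤ ((P:ℝ) / K) * M := mul_le_mul_of_nonneg_left hu2 hPK0
        linarith
      have e2 : (1 - γ * (freq a (a r) (r - 1) + (P:ℝ) / K)) * u (a r)
          = (1 - γ * freq a (a r) (r - 1)) * u (a r) - γ * (((P:ℝ) / K) * u (a r)) := by ring
      linarith
  -- sum up
  have hsum : (∑ r ∈ Finset.Ioc 0 N, G r)
      - M * (K + N * P / K) ≤ ∑ r ∈ Finset.Ioc 0 N, F (P + r) := by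
    have h1 : ∑ r ∈ Finset.Ioc 0 N, (G r - M * ((if r ≤ K then (1:ℝ) else 0) + P / K))
        ≤ ∑ r ∈ Finset.Ioc 0 N, F (P + r) := Finset.sum_le_sum hpt
    have h2 : ∑ r ∈ Finset.Ioc 0 N, (G r - M * ((if r ≤ K then (1:ℝ) else 0) + P / K))
        = (∑ r ∈ Finset.Ioc 0 N, G r)
          - M * ((∑ r ∈ Finset.Ioc 0 N, (if r ≤ K then (1:ℝ) else 0)) + N * (P / K)) := by
      rw [Finset.sum_sub_distrib, ← Finset.mul_sum, Finset.sum_add_distrib]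
      simp [Finset.sum_const, Nat.card_Ioc]
    have h3 : (∑ r ∈ Finset.Ioc 0 N, (if r ≤ K then (1:ℝ) else 0)) ≤ K := by
      rw [Finset.sum_boole]
      have : Finset.filter (fun r => r ≤ K) (Finset.Ioc 0 N) ⊆ Finset.Icc 1 K := by
        intro x hx
        simp only [Finset.mem_filter, Finset.mem_Ioc] at hx
        rw [Finset.mem_Icc]
        omega
      calc ((Finset.filter (fun r => r ≤ K) (Finset.Ioc 0 N)).card : ℝ)
          ≤ ((Finset.Icc 1 K).card : ℝ) := by exact_mod_cast Finset.card_le_card this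
        _ = K := by simp
    have h4 : M * ((∑ r ∈ Finset.Ioc 0 N, (if r ≤ K then (1:ℝ) else 0)) + N * (P / K))
        ≤ M * (K + N * P / K) := by
      apply mul_le_mul_of_nonneg_left _ hM0
      rw [mul_div_assoc]
      linarith
    linarith
  rw [Icc_eq_Ioc (P+N), hsplit, Icc_eq_Ioc N] at *
  linarith

end aux3
section glue
variable {A : Type*}

noncomputable def glueF (pick : ℕ → ℕ → (ℕ → A)) (a0 : A) : ℕ → ℕ × (ℕ → A)
  | 0 => (0, fun _ => a0)
  | (k+1) =>
      let p := glueF pick a0 k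
      (p.1 + (k+1)^2 * (p.1 + 1), fun t => if t ≤ p.1 then p.2 t else pick k p.1 (t - p.1))

lemma glueF_succ_fst (pick : ℕ → ℕ → (ℕ → A)) (a0 : A) (k : ℕ) :
    (glueF pick a0 (k+1)).1 = (glueF pick a0 k).1 + (k+1)^2 * ((glueF pick a0 k).1 + 1) := rfl

lemma glueF_succ_snd (pick : ℕ → ℕ → (ℕ → A)) (a0 : A) (k : ℕ) :
    (glueF pick a0 (k+1)).2 = fun t => if t ≤ (glueF pick a0 k).1
      then (glueF pick a0 k).2 t else pick k (glueF pick a0 k).1 (t - (glueF pick a0 k).1) := rfl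

lemma glueF_fst_mono (pick : ℕ → ℕ → (ℕ → A)) (a0 : A) :
    Monotone fun k => (glueF pick a0 k).1 :=
  monotone_nat_of_le_succ fun k => by rw [glueF_succ_fst]; omega

lemma le_glueF_fst (pick : ℕ → ℕ → (ℕ → A)) (a0 : A) (k : ℕ) : k ≤ (glueF pick a0 k).1 := by
  induction k with
  | zero => simp
  | succ k ih =>
    rw [glueF_succ_fst]
    nlinarith

lemma glueF_stab (pick : ℕ → ℕ → (ℕ → A)) (a0 : A) (k m : ℕ) (hm : k ≤ m) :
    ∀ t, t ≤ (glueF pick a0 k).1 → (glueF pick a0 m).2 t = (glueF pick a0 k).2 t := by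
  induction m, hm using Nat.le_induction with
  | base => intro t _; rfl
  | succ m hm ih =>
    intro t ht
    have hS : (glueF pick a0 k).1 ≤ (glueF pick a0 m).1 := glueF_fst_mono pick a0 hm
    rw [glueF_succ_snd]
    simp only [if_pos (ht.trans hS)]
    exact ih t ht

lemma glue_agree (pick : ℕ → ℕ → (ℕ → A)) (a0 : A) (k t : ℕ)
    (ht : t ≤ (glueF pick a0 k).1) :
    (glueF pick a0 t).2 t = (glueF pick a0 k).2 t := by
  have h1 : t ≤ (glueF pick a0 t).1 := le_glueF_fst pick a0 t
  rcases le_total t k with h | h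
  · exact (glueF_stab pick a0 t k h t h1).symm
  · exact glueF_stab pick a0 k t h t ht

end glue
lemma numeric_bound (M v x δ Pr Nr Kr R : ℝ) (hM0 : 0 ≤ M)
    (f1 : Nr = R^2 * (Pr+1)) (f2 : Kr = R * (Pr+1)) (f10 : δ * R = 1)
    (f3 : v - δ < x) (f4 : x ≤ M) (f7 : v ≤ M)
    (f9 : 0 ≤ Pr) (fN1 : 1 ≤ Nr) (fδ0 : 0 < δ) (hR : 0 < R) (hR1 : 1 ≤ R) :
    v - (3*M+1) * δ ≤ (Nr * x - M * (Kr + Nr * Pr / Kr)) / (Pr + Nr) := by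
  have hKr0 : (0:ℝ) < Kr := by rw [f2]; nlinarith
  have hid : Nr * Pr / Kr = R * Pr := by
    rw [f1, f2]
    field_simp
  have hNδ : Nr * δ = R * (Pr+1) := by
    rw [f1]
    calc R^2 * (Pr+1) * δ = (R * (Pr+1)) * (δ * R) := by ring
      _ = R * (Pr+1) := by rw [f10]; ring
  have hcont : M * (Kr + Nr * Pr / Kr) ≤ 2 * M * (Nr * δ) := by
    rw [hid, f2, hNδ]
    nlinarith [mul_nonneg hM0 hR.le]
  have hPδN : Pr ≤ δ * Nr := by nlinarith [hNδ]
  have fD : (0:ℝ) < Pr + Nr := by linarith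
  rw [le_div_iff₀ fD]
  nlinarith [hcont,
    mul_nonneg (by linarith : (0:ℝ) ≤ x - v + δ) (by linarith : (0:ℝ) ≤ Nr),
    mul_nonneg hM0 (by linarith : (0:ℝ) ≤ δ * Nr - Pr),
    mul_nonneg (by linarith : (0:ℝ) ≤ M - v) f9,
    mul_nonneg (by linarith : (0:ℝ) ≤ 3*M+1) (mul_nonneg fδ0.le f9)]

theorem stmt13 {A : Type*} [Fintype A] [DecidableEq A] [Nonempty A]
    (u : A → ℝ) (hu : ∀ x, 0 ≤ u x) (γ : ℝ) (hγ : 0 < γ ∧ γ ≤ 1)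
    (L : ℝ) (hconv : Tendsto (fun T => vT (A := A) u γ T) atTop (nhds L)) :
    L = ⨆ a : ℕ → A, limsup (fun T => avgU u γ a T) atTop := by
  obtain ⟨x0⟩ := ‹Nonempty A›
  set M : ℝ := Finset.univ.sup' Finset.univ_nonempty u with hMdef
  have hM : ∀ x, u x ≤ M := fun x => Finset.le_sup' u (Finset.mem_univ x)
  have hM0 : 0 ≤ M := (hu x0).trans (hM x0)
  have hcob : ∀ a : ℕ → A, IsCoboundedUnder (· ≤ ·) atTop (fun T => avgU u γ a T) := fun a =>
    (isBoundedUnder_of ⟨0, fun T => avgU_nonneg u hu hγ a T⟩ :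
      IsBoundedUnder (· ≥ ·) atTop _).isCoboundedUnder_le
  have hbdd : ∀ a : ℕ → A, IsBoundedUnder (· ≤ ·) atTop (fun T => avgU u γ a T) := fun a =>
    isBoundedUnder_of ⟨M, fun T => avgU_le u hu hγ hM0 hM a T⟩
  have hlimsup_le : ∀ a : ℕ → A, limsup (fun T => avgU u γ a T) atTop ≤ L := by
    intro a
    rw [← hconv.limsup_eq]
    exact limsup_le_limsup (Eventually.of_forall fun T => avgU_le_vT u hu hγ hM0 hM a T)
      (hcob a) (isBoundedUnder_of ⟨M, fun T => vT_le u hu hγ hM0 hM T⟩)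
  refine le_antisymm ?_ (ciSup_le hlimsup_le)
  -- pick near-optimal blocks
  have spec : ∀ k P : ℕ, ∃ a : ℕ → A,
      vT u γ ((k+1)^2 * (P+1)) - 1/(k+1 : ℝ) < avgU u γ a ((k+1)^2 * (P+1)) := by
    intro k P
    apply exists_lt_of_lt_ciSup
    exact sub_lt_self _ (by positivity)
  set pick : ℕ → ℕ → (ℕ → A) := fun k P => Classical.choose (spec k P) with hpickdef
  have hpick : ∀ k P, vT u γ ((k+1)^2 * (P+1)) - 1/(k+1 : ℝ)
      < avgU u γ (pick k P) ((k+1)^2 * (P+1)) := fun k P => Classical.choose_spec (spec k P)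
  set b : ℕ → A := fun t => (glueF pick x0 t).2 t with hbdef
  set S : ℕ → ℕ := fun k => (glueF pick x0 k).1 with hSdef
  set Nk : ℕ → ℕ := fun k => (k+1)^2 * (S k + 1) with hNkdef
  -- key estimate
  have key : ∀ k : ℕ, vT u γ (Nk k) - (3*M+1) * (1/(k+1:ℝ))
      ≤ avgU u γ b (S (k+1)) := by
    intro k
    set P := S k with hPdef
    set N := Nk k with hNdef
    set K := (k+1) * (P+1) with hKdef
    set a : ℕ → A := pick k P with hadef
    have hK1 : 1 ≤ K := Nat.succ_le_of_lt (Nat.mul_pos (Nat.succ_pos k) (Nat.succ_pos P))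
    have hN1 : 1 ≤ N := by
      have : Nk k = (k+1)^2 * (P+1) := rfl
      rw [hNdef, this]
      exact Nat.succ_le_of_lt (Nat.mul_pos (by positivity) (Nat.succ_pos P))
    have hSk1 : S (k+1) = P + N := glueF_succ_fst pick x0 k
    have hbag : avgU u γ b (S (k+1)) = avgU u γ (glueF pick x0 (k+1)).2 (S (k+1)) :=
      avgU_congr u γ b _ _ fun s _ hs2 => glue_agree pick x0 (k+1) s hs2
    have h2' : (glueF pick x0 (k+1)).2
        = fun t => if t ≤ P then (glueF pick x0 k).2 t else a (t - P) :=
      glueF_succ_snd pick x0 k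
    have hblock := block_sum u hu hγ hM0 hM (glueF pick x0 k).2 a P N K hK1
    -- reals
    set δ : ℝ := 1/(k+1:ℝ) with hδdef
    set Pr : ℝ := (P : ℝ) with hPrdef
    set Nr : ℝ := (N : ℝ) with hNrdef
    set Kr : ℝ := (K : ℝ) with hKrdef
    set v : ℝ := vT u γ N with hvdef
    set x : ℝ := avgU u γ a N with hxdef
    have f1 : Nr = ((k:ℝ)+1)^2 * (Pr+1) := by
      rw [hNrdef, hPrdef, hNdef, show Nk k = (k+1)^2 * (P+1) from rfl]
      push_cast
      ring
    have f2 : Kr = ((k:ℝ)+1) * (Pr+1) := by rw [hKrdef, hPrdef, hKdef]; push_cast; ring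
    have f3 : v - δ < x := hpick k P
    have f4 : x ≤ M := avgU_le u hu hγ hM0 hM a N
    have f7 : v ≤ M := vT_le u hu hγ hM0 hM N
    have f8 : (0:ℝ) < (k:ℝ)+1 := by positivity
    have f9 : (0:ℝ) ≤ Pr := by rw [hPrdef]; exact Nat.cast_nonneg P
    have f10 : δ * ((k:ℝ)+1) = 1 := by rw [hδdef]; field_simp
    have fN1 : (1:ℝ) ≤ Nr := by rw [hNrdef]; exact_mod_cast hN1
    have fδ0 : 0 < δ := by rw [hδdef]; positivity
    have fD : (0:ℝ) < Pr + Nr := by linarith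
    -- sum over block = N * x
    have hsumG : ∑ t ∈ Finset.Icc 1 N, (1 - γ * freq a (a t) (t - 1)) * u (a t) = Nr * x := by
      rw [hxdef, avgU, hNrdef]
      have hN0 : ((N:ℕ):ℝ) ≠ 0 := Nat.cast_ne_zero.2 (by omega)
      field_simp
    -- cast of avgU at P+N
    have havg : avgU u γ (fun t => if t ≤ P then (glueF pick x0 k).2 t else a (t - P)) (P+N)
        = (∑ t ∈ Finset.Icc 1 (P + N),
        (1 - γ * freq (fun t => if t ≤ P then (glueF pick x0 k).2 t else a (t - P))
            ((fun t => if t ≤ P then (glueF pick x0 k).2 t else a (t - P)) t) (t - 1))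
          * u ((fun t => if t ≤ P then (glueF pick x0 k).2 t else a (t - P)) t)) / (Pr + Nr) := by
      rw [avgU]
      congr 1
      push_cast
      rw [← hPrdef, ← hNrdef]
    have hstep : (Nr * x - M * (Kr + Nr * Pr / Kr)) / (Pr + Nr)
        ≤ avgU u γ b (S (k+1)) := by
      rw [hbag, hSk1, h2', havg, div_eq_mul_inv, div_eq_mul_inv]
      apply mul_le_mul_of_nonneg_right _ (inv_nonneg.2 fD.le)
      rw [← hsumG]
      exact hblock
    exact le_trans (numeric_bound M v x δ Pr Nr Kr ((k:ℝ)+1) hM0 f1 f2 f10 f3 f4 f7 f9 fN1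
      fδ0 f8 (by linarith)) hstep
  -- limits
  have hNk_ge : ∀ k, k + 1 ≤ Nk k := by
    intro k
    calc k + 1 ≤ (k+1)^2 := by nlinarith
      _ ≤ (k+1)^2 * (S k + 1) := Nat.le_mul_of_pos_right _ (Nat.succ_pos _)
  have htendN : Tendsto Nk atTop atTop :=
    tendsto_atTop_mono (fun k => Nat.le_of_succ_le (hNk_ge k)) tendsto_id
  have htend1 : Tendsto (fun k => vT u γ (Nk k)) atTop (nhds L) := hconv.comp htendN
  have htend2 : Tendsto (fun k : ℕ => (3*M+1) * (1/(k+1:ℝ))) atTop (nhds 0) := by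
    simpa using (tendsto_one_div_add_atTop_nhds_zero_nat.const_mul (3*M+1))
  have hlow : Tendsto (fun k => vT u γ (Nk k) - (3*M+1) * (1/(k+1:ℝ))) atTop (nhds L) := by
    simpa using htend1.sub htend2
  -- conclude
  have hLlimsup : L ≤ limsup (fun T => avgU u γ b T) atTop := by
    apply le_of_forall_pos_le_add
    intro ε hε
    have hfreq : ∃ᶠ T in atTop, L - ε ≤ avgU u γ b T := by
      rw [frequently_atTop]
      intro n
      have hev : ∀ᶠ k in atTop, L - ε ≤ vT u γ (Nk k) - (3*M+1) * (1/(k+1:ℝ)) :=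
        hlow.eventually (eventually_ge_nhds (by linarith))
      obtain ⟨k0, hk0⟩ := eventually_atTop.1 hev
      refine ⟨S (max k0 n + 1), ?_, ?_⟩
      · calc n ≤ max k0 n + 1 := by omega
          _ ≤ S (max k0 n + 1) := le_glueF_fst pick x0 _
      · exact (hk0 _ (le_max_left _ _)).trans (key (max k0 n))
    have := le_limsup_of_frequently_le hfreq (hbdd b)
    linarith
  have hbddS : BddAbove (Set.range fun a : ℕ → A => limsup (fun T => avgU u γ a T) atTop) := by
    refine ⟨M, ?_⟩
    rintro _ ⟨a, rfl⟩
    exact limsup_le_of_le (hcob a) (Eventually.of_forall fun T => avgU_le u hu hγ hM0 hM a T)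
  exact hLlimsup.trans (le_ciSup hbddS b)
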